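/- Let φ ∈ C(ℝ,X) be uniformly comparable by character of recurrence with ψ ∈ C(ℝ,Y), and let ψ be Lagrange stable. If ψ is pseudo-periodic, then φ is pseudo-periodic. -/

import Mathlib

/-!
Under Lagrange stability of `ψ`, the inclusion `𝔐_ψ ⊆ 𝔐_φ` forces every sufficiently good
almost period of `ψ` to be an `ε`-almost period of `φ`. Otherwise there are `1/(n+1)`-almost
periods `τₙ` of `ψ` and points `sₙ` with `ρ(φ(sₙ + τₙ), φ(sₙ)) ≥ ε`. Along a subsequence `ψ^{sₙ}`
converges, hence so does `ψ^{sₙ+τₙ}`, to the same limit, so the interleaved sequence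
`s₀, s₀ + τ₀, s₁, s₁ + τ₁, …` lies in `𝔐_ψ ⊆ 𝔐_φ`. Then `φ^{sₙ}` and `φ^{sₙ+τₙ}` have a common
limit, and evaluating at `0` gives a contradiction. Large positive and negative almost periods
of `ψ` are therefore large positive and negative almost periods of `φ`.
-/

open Filter Topology

/-- The Bebutov metric on `C(ℝ, X)`:
`d(φ₁,φ₂) = sup_{T>0} min ( max_{|t| ≤ T} ρ(φ₁(t), φ₂(t)), 1/T )`. -/
noncomputable def bebutovDist {X : Type*} [MetricSpace X] (φ ψ : C(ℝ, X)) : ℝ :=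
  ⨆ T : Set.Ioi (0 : ℝ),
    min (⨆ t : Set.Icc (-(T : ℝ)) (T : ℝ), dist (φ t.1) (ψ t.1)) (1 / (T : ℝ))

/-- The translate `φ^h` of `φ ∈ C(ℝ,X)`, given by `φ^h(t) = φ(t + h)`. -/
def timeShift {X : Type*} [MetricSpace X] (φ : C(ℝ, X)) (h : ℝ) : C(ℝ, X) :=
  ⟨fun t => φ (t + h), φ.continuous.comp (continuous_id.add continuous_const)⟩

/-- `𝔑_φ`: the family of sequences `{tₙ} ⊂ ℝ` with `φ^{tₙ} → φ` in `(C(ℝ,X),d)`. -/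
def NClass {X : Type*} [MetricSpace X] (φ : C(ℝ, X)) : Set (ℕ → ℝ) :=
  {t | Tendsto (fun n => bebutovDist (timeShift φ (t n)) φ) atTop (𝓝 0)}

/-- `𝔐_φ`: the family of sequences `{tₙ} ⊂ ℝ` such that `{φ^{tₙ}}` converges in
`(C(ℝ,X),d)`. -/
def MClass {X : Type*} [MetricSpace X] (φ : C(ℝ, X)) : Set (ℕ → ℝ) :=
  {t | ∃ ψ : C(ℝ, X), Tendsto (fun n => bebutovDist (timeShift φ (t n)) ψ) atTop (𝓝 0)}

/-- `𝔑^u_φ`: sequences in `𝔑_φ` with `φ^{s+tₙ} → φ^s` uniformly in `s ∈ ℝ`. -/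
def NuClass {X : Type*} [MetricSpace X] (φ : C(ℝ, X)) : Set (ℕ → ℝ) :=
  {t | t ∈ NClass φ ∧ ∀ ε > (0 : ℝ), ∃ N : ℕ, ∀ n ≥ N, ∀ s : ℝ,
    bebutovDist (timeShift φ (s + t n)) (timeShift φ s) < ε}

/-- `𝔐^u_φ`: sequences in `𝔐_φ` such that `{φ^{s+tₙ}}` converges uniformly in `s ∈ ℝ`. -/
def MuClass {X : Type*} [MetricSpace X] (φ : C(ℝ, X)) : Set (ℕ → ℝ) :=
  {t | t ∈ MClass φ ∧ ∃ ψ : ℝ → C(ℝ, X), ∀ ε > (0 : ℝ), ∃ N : ℕ, ∀ n ≥ N, ∀ s : ℝ,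
    bebutovDist (timeShift φ (s + t n)) (ψ s) < ε}

/-- A subset `S ⊆ ℝ` is relatively dense if some length `l > 0` interval always meets it. -/
def RelativelyDense (S : Set ℝ) : Prop :=
  ∃ l > (0 : ℝ), ∀ a : ℝ, ∃ τ ∈ S, τ ∈ Set.Icc a (a + l)

/-- `φ` is Poisson stable: for every `ε > 0` and `l > 0` there are `ε`-shifts `τ₁ > l`
and `τ₂ < −l`. -/
def PoissonStable {X : Type*} [MetricSpace X] (φ : C(ℝ, X)) : Prop :=
  ∀ ε > (0 : ℝ), ∀ l > (0 : ℝ),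
    (∃ τ : ℝ, l < τ ∧ bebutovDist (timeShift φ τ) φ < ε) ∧
    (∃ τ : ℝ, τ < -l ∧ bebutovDist (timeShift φ τ) φ < ε)

/-- `φ` is almost recurrent in the sense of Bebutov. -/
def AlmostRecurrent {X : Type*} [MetricSpace X] (φ : C(ℝ, X)) : Prop :=
  ∀ ε > (0 : ℝ), RelativelyDense {τ : ℝ | bebutovDist (timeShift φ τ) φ < ε}

/-- `τ` is an `ε`-almost period of `φ`: `ρ(φ(t+τ),φ(t)) < ε` for all `t`. -/
def IsAlmostPeriod {X : Type*} [MetricSpace X] (φ : C(ℝ, X)) (ε τ : ℝ) : Prop :=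
  ∀ t : ℝ, dist (φ (t + τ)) (φ t) < ε

/-- `φ` is Bohr almost periodic: its set of `ε`-almost periods is relatively dense for
every `ε > 0`. -/
def BohrAlmostPeriodic {X : Type*} [MetricSpace X] (φ : C(ℝ, X)) : Prop :=
  ∀ ε > (0 : ℝ), RelativelyDense {τ : ℝ | IsAlmostPeriod φ ε τ}

/-- `φ` is Lagrange stable: every sequence of translates has a subsequence converging in
the Bebutov metric (i.e. `{φ^h : h ∈ ℝ}` is relatively compact in `(C(ℝ,X),d)`). -/
def LagrangeStable {X : Type*} [MetricSpace X] (φ : C(ℝ, X)) : Prop :=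
  ∀ h : ℕ → ℝ, ∃ (k : ℕ → ℕ) (ψ : C(ℝ, X)), StrictMono k ∧
    Tendsto (fun n => bebutovDist (timeShift φ (h (k n))) ψ) atTop (𝓝 0)

/-- `φ` is Birkhoff recurrent: almost recurrent and Lagrange stable. -/
def BirkhoffRecurrent {X : Type*} [MetricSpace X] (φ : C(ℝ, X)) : Prop :=
  AlmostRecurrent φ ∧ LagrangeStable φ

/-- `φ` is Levitan almost periodic. -/
def LevitanAlmostPeriodic {X : Type*} [MetricSpace X] (φ : C(ℝ, X)) : Prop :=
  ∃ (Z : Type) (_ : MetricSpace Z) (_ : CompleteSpace Z) (χ : C(ℝ, Z)),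
    BohrAlmostPeriodic χ ∧
    ∀ ε > (0 : ℝ), ∃ δ > (0 : ℝ), ∀ τ : ℝ, IsAlmostPeriod χ δ τ →
      bebutovDist (timeShift φ τ) φ < ε

/-- `φ` is quasi-periodic with the spectrum of frequencies `ν₁,…,ν_k`. -/
def QuasiPeriodic {X : Type*} [MetricSpace X] (φ : C(ℝ, X)) {k : ℕ} (ν : Fin k → ℝ) :
    Prop :=
  LinearIndependent ℚ ν ∧
  ∃ Φ : C((Fin k → ℝ), X),
    (∀ v : Fin k → ℝ, Φ (fun i => v i + 2 * Real.pi) = Φ v) ∧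
    ∀ t : ℝ, φ t = Φ (fun i => ν i * t)

/-- `φ` is pseudo-periodic: for every `ε > 0` and `l > 0` there exist `ε`-almost
periods `τ₁ > l` and `τ₂ < −l`. -/
def PseudoPeriodic {X : Type*} [MetricSpace X] (φ : C(ℝ, X)) : Prop :=
  ∀ ε > (0 : ℝ), ∀ l > (0 : ℝ),
    (∃ τ : ℝ, l < τ ∧ IsAlmostPeriod φ ε τ) ∧
    (∃ τ : ℝ, τ < -l ∧ IsAlmostPeriod φ ε τ)

/-- `φ` is pseudo-recurrent. -/
def PseudoRecurrent {X : Type*} [MetricSpace X] (φ : C(ℝ, X)) : Prop :=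
  ∀ ε > (0 : ℝ), ∀ l : ℝ, ∃ L : ℝ, l ≤ L ∧ ∀ τ₀ : ℝ, ∃ τ ∈ Set.Icc l L,
    ∀ t : ℝ, |t| ≤ 1 / ε → dist (φ (t + τ₀ + τ)) (φ (t + τ₀)) ≤ ε

theorem Filter.Tendsto.interleave {α : Type*} {l : Filter α} {f g : ℕ → α}
    (hf : Tendsto f atTop l) (hg : Tendsto g atTop l) :
    Tendsto (fun n => if Even n then f (n / 2) else g (n / 2)) atTop l := by
  have hhalf := Nat.tendsto_div_const_atTop (n := 2) two_ne_zero
  intro s hs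
  rw [mem_map]
  filter_upwards [hhalf.eventually (hf hs), hhalf.eventually (hg hs)] with n hfn hgn
  rw [Set.mem_preimage]
  split_ifs
  · exact hfn
  · exact hgn

section Bebutov

variable {X : Type*} [MetricSpace X]

lemma bddAbove_range_dist_Icc (f g : C(ℝ, X)) (T : ℝ) :
    BddAbove (Set.range fun t : Set.Icc (-T) T => dist (f t) (g t)) := by
  have := (isCompact_Icc (a := -T) (b := T)).image (f.continuous.dist g.continuous)
  rw [Set.image_eq_range] at this
  exact this.bddAbove

lemma bddAbove_range_min_iSup_dist (f g : C(ℝ, X)) :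
    BddAbove (Set.range fun T : Set.Ioi (0 : ℝ) =>
      min (⨆ t : Set.Icc (-(T : ℝ)) T, dist (f t) (g t)) (1 / (T : ℝ))) := by
  obtain ⟨C, hC⟩ := bddAbove_range_dist_Icc f g 1
  refine ⟨max C 1, ?_⟩
  rintro _ ⟨⟨T, hT : 0 < T⟩, rfl⟩
  rcases le_total T 1 with hT1 | hT1
  · have : Nonempty (Set.Icc (-T) T) := ⟨⟨0, by simp [hT.le]⟩⟩
    refine (min_le_left _ _).trans (le_max_of_le_left (ciSup_le fun ⟨t, ht⟩ => ?_))
    exact hC ⟨⟨t, by linarith [ht.1], by linarith [ht.2]⟩, rfl⟩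
  · exact (min_le_right _ _).trans (le_max_of_le_right ((div_le_one hT).2 hT1))

lemma min_dist_le_bebutovDist (f g : C(ℝ, X)) {T t : ℝ} (hT : 0 < T)
    (ht : t ∈ Set.Icc (-T) T) : min (dist (f t) (g t)) (1 / T) ≤ bebutovDist f g :=
  (min_le_min_right _ (le_ciSup (bddAbove_range_dist_Icc f g T) ⟨t, ht⟩)).trans
    (le_ciSup (bddAbove_range_min_iSup_dist f g) ⟨T, hT⟩)

lemma bebutovDist_le {f g : C(ℝ, X)} {c : ℝ} (hc : 0 ≤ c)
    (h : ∀ T > 0, ∀ t ∈ Set.Icc (-T) T, min (dist (f t) (g t)) (1 / T) ≤ c) :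
    bebutovDist f g ≤ c := by
  refine Real.iSup_le (fun ⟨T, (hT : 0 < T)⟩ => ?_) hc
  by_cases hTc : 1 / T ≤ c
  · exact (min_le_right _ _).trans hTc
  · have : Nonempty (Set.Icc (-T) T) := ⟨⟨0, by simp [hT.le]⟩⟩
    refine (min_le_left _ _).trans (ciSup_le fun ⟨t, ht⟩ => ?_)
    exact ((min_le_iff.1 (h T hT t ht)).resolve_right hTc)

lemma bebutovDist_nonneg (f g : C(ℝ, X)) : 0 ≤ bebutovDist f g :=
  (le_min dist_nonneg (by norm_num)).trans
    (min_dist_le_bebutovDist f g one_pos ⟨by norm_num, zero_le_one⟩)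

lemma bebutovDist_triangle (f g h : C(ℝ, X)) :
    bebutovDist f h ≤ bebutovDist f g + bebutovDist g h := by
  refine bebutovDist_le (add_nonneg (bebutovDist_nonneg f g) (bebutovDist_nonneg g h))
    fun T hT t ht => ?_
  have htri := dist_triangle (f t) (g t) (h t)
  have hT' : 0 < 1 / T := one_div_pos.2 hT
  calc min (dist (f t) (h t)) (1 / T)
      ≤ min (dist (f t) (g t)) (1 / T) + min (dist (g t) (h t)) (1 / T) := by
        simp only [min_def]
        have := dist_nonneg (x := f t) (y := g t)
        have := dist_nonneg (x := g t) (y := h t)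
        split_ifs <;> linarith
    _ ≤ bebutovDist f g + bebutovDist g h :=
        add_le_add (min_dist_le_bebutovDist f g hT ht) (min_dist_le_bebutovDist g h hT ht)

lemma bebutovDist_le_of_forall_dist_le {f g : C(ℝ, X)} {c : ℝ} (hc : 0 ≤ c)
    (h : ∀ t, dist (f t) (g t) ≤ c) : bebutovDist f g ≤ c :=
  bebutovDist_le hc fun _ _ t _ => (min_le_left _ _).trans (h t)

lemma dist_apply_zero_lt_of_bebutovDist_lt {f g : C(ℝ, X)} {ε : ℝ} (hε : 0 < ε)
    (h : bebutovDist f g < ε) : dist (f 0) (g 0) < ε := by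
  have hε' : 0 < 1 / ε := one_div_pos.2 hε
  have := (min_dist_le_bebutovDist f g hε' ⟨by linarith, hε'.le⟩).trans_lt h
  rwa [one_div_one_div, min_lt_iff, lt_self_iff_false, or_false] at this

variable {ι : Type*} {l : Filter ι}

lemma tendsto_apply_zero_of_tendsto_bebutovDist {F : ι → C(ℝ, X)} {G : C(ℝ, X)}
    (hF : Tendsto (fun i => bebutovDist (F i) G) l (𝓝 0)) :
    Tendsto (fun i => F i 0) l (𝓝 (G 0)) :=
  Metric.tendsto_nhds.2 fun _ hε =>
    (hF.eventually (gt_mem_nhds hε)).mono fun _ => dist_apply_zero_lt_of_bebutovDist_lt hε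

lemma tendsto_bebutovDist_trans {F F' : ι → C(ℝ, X)} {G : C(ℝ, X)}
    (hF : Tendsto (fun i => bebutovDist (F i) G) l (𝓝 0))
    (hF' : Tendsto (fun i => bebutovDist (F' i) (F i)) l (𝓝 0)) :
    Tendsto (fun i => bebutovDist (F' i) G) l (𝓝 0) :=
  squeeze_zero (fun _ => bebutovDist_nonneg _ _) (fun _ => bebutovDist_triangle _ _ _)
    (by simpa using hF'.add hF)

end Bebutov

section Comparable

variable {X Y : Type*} [MetricSpace X] [MetricSpace Y] {φ : C(ℝ, X)} {ψ : C(ℝ, Y)}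

lemma tendsto_dist_of_mClass_subset (h : MClass ψ ⊆ MClass φ) {a b : ℕ → ℝ} {η : C(ℝ, Y)}
    (ha : Tendsto (fun n => bebutovDist (timeShift ψ (a n)) η) atTop (𝓝 0))
    (hb : Tendsto (fun n => bebutovDist (timeShift ψ (b n)) η) atTop (𝓝 0)) :
    Tendsto (fun n => dist (φ (b n)) (φ (a n))) atTop (𝓝 0) := by
  set u : ℕ → ℝ := fun n => if Even n then a (n / 2) else b (n / 2) with hu
  have hu_mem : u ∈ MClass ψ := ⟨η, (ha.interleave hb).congr fun n => by
    simp only [hu]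
    split_ifs <;> rfl⟩
  obtain ⟨χ, hχ⟩ := h hu_mem
  have hχ0 : Tendsto (fun n => φ (u n)) atTop (𝓝 (χ 0)) := by
    simpa [timeShift] using tendsto_apply_zero_of_tendsto_bebutovDist hχ
  have hu_even : ∀ n, u (2 * n) = a n := fun n => by simp [hu]
  have hu_odd : ∀ n, u (2 * n + 1) = b n := fun n => by
    simp [hu, show (2 * n + 1) / 2 = n by omega]
  have h2 : StrictMono fun n : ℕ => 2 * n := fun _ _ hmn => by dsimp only; omega
  have h2' : StrictMono fun n : ℕ => 2 * n + 1 := fun _ _ hmn => by dsimp only; omega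
  have ha' : Tendsto (fun n => φ (a n)) atTop (𝓝 (χ 0)) := by
    simpa [Function.comp_def, hu_even] using hχ0.comp h2.tendsto_atTop
  have hb' : Tendsto (fun n => φ (b n)) atTop (𝓝 (χ 0)) := by
    simpa [Function.comp_def, hu_odd] using hχ0.comp h2'.tendsto_atTop
  simpa using hb'.dist ha'

theorem exists_isAlmostPeriod_imp_isAlmostPeriod (h : MClass ψ ⊆ MClass φ)
    (hL : LagrangeStable ψ) {ε : ℝ} (hε : 0 < ε) :
    ∃ δ > 0, ∀ τ, IsAlmostPeriod ψ δ τ → IsAlmostPeriod φ ε τ := by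
  by_contra! hcon
  have hbad : ∀ n : ℕ, ∃ τ s : ℝ,
      IsAlmostPeriod ψ (1 / ((n : ℝ) + 1)) τ ∧ ε ≤ dist (φ (s + τ)) (φ s) := fun n => by
    obtain ⟨τ, hψτ, hφτ⟩ := hcon _ Nat.one_div_pos_of_nat
    simp only [IsAlmostPeriod, not_forall, not_lt] at hφτ
    obtain ⟨s, hs⟩ := hφτ
    exact ⟨τ, s, hψτ, hs⟩
  choose τ s hψτ hφτ using hbad
  obtain ⟨k, η, hk, hη⟩ := hL s
  have hclose : Tendsto (fun n => bebutovDist (timeShift ψ (s (k n) + τ (k n)))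
      (timeShift ψ (s (k n)))) atTop (𝓝 0) :=
    squeeze_zero (fun _ => bebutovDist_nonneg _ _)
      (fun n => bebutovDist_le_of_forall_dist_le Nat.one_div_pos_of_nat.le fun t => by
        simpa [timeShift, add_assoc] using (hψτ (k n) (t + s (k n))).le)
      (tendsto_one_div_add_atTop_nhds_zero_nat.comp hk.tendsto_atTop)
  obtain ⟨n, hn⟩ := ((tendsto_dist_of_mClass_subset h hη
    (tendsto_bebutovDist_trans hη hclose)).eventually (gt_mem_nhds hε)).exists
  exact (hφτ (k n)).not_gt hn

end Comparable

theorem pseudoPeriodic_of_uniformly_comparable_general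
    {X Y : Type*} [MetricSpace X] [MetricSpace Y]
    (φ : C(ℝ, X)) (ψ : C(ℝ, Y)) (h : MClass ψ ⊆ MClass φ)
    (hL : LagrangeStable ψ) (hψ : PseudoPeriodic ψ) : PseudoPeriodic φ := by
  intro ε hε l hl
  obtain ⟨δ, hδ, hδε⟩ := exists_isAlmostPeriod_imp_isAlmostPeriod h hL hε
  obtain ⟨⟨τ₁, hτ₁, hψτ₁⟩, ⟨τ₂, hτ₂, hψτ₂⟩⟩ := hψ δ hδ l hl
  exact ⟨⟨τ₁, hτ₁, hδε τ₁ hψτ₁⟩, ⟨τ₂, hτ₂, hδε τ₂ hψτ₂⟩⟩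

/-- If `φ` is uniformly comparable by character of recurrence with `ψ` (`𝔐_ψ ⊆ 𝔐_φ`),
`ψ` is Lagrange stable and pseudo-periodic, then `φ` is pseudo-periodic. -/
theorem pseudoPeriodic_of_uniformly_comparable
    {X Y : Type*} [MetricSpace X] [CompleteSpace X] [MetricSpace Y] [CompleteSpace Y]
    (φ : C(ℝ, X)) (ψ : C(ℝ, Y)) (h : MClass ψ ⊆ MClass φ)
    (hL : LagrangeStable ψ) (hψ : PseudoPeriodic ψ) : PseudoPeriodic φ :=
  pseudoPeriodic_of_uniformly_comparable_general φ ψ h hL hψ
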